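/- Let $x_0$ be a simple root of the Bessel polynomial $p_{d-1}(\lambda, 1)$. In the chart $\mu = 1$ with translated coordinate $\lambda' = \lambda - x_0$, the inverse Gaussian coordinate functions $f_0 = (\lambda'+x_0)^{d-1}s^d$ and $f_j = (\lambda'+x_0)^{d-j}s^{d-j}p_{j-1}(\lambda'+x_0,1)$ for $j = 1,\ldots,d$ have lowest-degree terms (in $\lambda', s$) of degrees $d, d-1, \ldots, 1, 1$ respectively; in particular, the lowest-degree term of $f_d$ is a nonzero multiple of $\lambda'$, and the point $(\lambda',s) = (0,0)$ is a zero of multiplicity exactly $1$ of a generic linear combination $\sum_j a_j f_j$. -/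

import Mathlib

noncomputable section

open MvPolynomial

/-- The Bessel polynomials over `ℂ`. -/
def besselP : ℕ → Polynomial ℂ
  | 0 => 1
  | 1 => Polynomial.X + 1
  | (n + 2) => Polynomial.C (2 * ((n : ℂ) + 2) - 1) * Polynomial.X * besselP (n + 1) + besselP n

/-- The homogenized Bessel polynomial `pₙ(λ, μ)` of degree `n`, with first variable
`λ` and second variable `μ`. -/
def besselH2 : ℕ → MvPolynomial (Fin 2) ℂ
  | 0 => 1
  | 1 => X 0 + X 1
  | (n + 2) => C (2 * ((n : ℂ) + 2) - 1) * X 0 * besselH2 (n + 1) + (X 1) ^ 2 * besselH2 n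

/-- The inverse Gaussian coordinate functions in the chart `μ = 1`, translated by a
root `x₀` of `p_{d-1}(λ, 1)`; variables `λ' = X 0` and `s = X 1`:
`f₀ = (λ' + x₀)^(d-1) s^d` and `f_j = (λ' + x₀)^(d-j) s^(d-j) p_{j-1}(λ' + x₀, 1)`. -/
def igFt (d : ℕ) (x₀ : ℂ) (j : ℕ) : MvPolynomial (Fin 2) ℂ :=
  if j = 0 then (X 0 + C x₀) ^ (d - 1) * X 1 ^ d
  else (X 0 + C x₀) ^ (d - j) * X 1 ^ (d - j) *
    aeval ![X 0 + C x₀, (1 : MvPolynomial (Fin 2) ℂ)] (besselH2 (j - 1))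

/-- Total degree of an exponent vector. -/
def totDeg (m : Fin 2 →₀ ℕ) : ℕ := m.sum fun _ e => e

/-!
In the chart, `f_j` is `s^(d-j)` times a polynomial in `λ'` whose value at `λ' = 0` is
`x₀^(d-j) p_{j-1}(x₀)`, so its lowest-degree term is a multiple of `s^(d-j)` as soon as
`p_{j-1}(x₀) ≠ 0`; and `f_d = p_{d-1}(λ' + x₀)` has linear part `p_{d-1}'(x₀) λ'`.
Every `f_j` with `j < d` is divisible by `s`, so in `∑ a_j f_j` only `f_d` contributes to the
constant term and to the coefficient of `λ'`.

It remains to see that a root `x` of `p_{d-1}` is not a root of any `p_k` with `k < d - 1`.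
For `S_n = Re (p_{n+1}(x) · conj p_n(x))` the three-term recurrence gives `S_0 = Re x + 1` and
`S_{n+1} = S_n + (2n+3) Re x |p_{n+1}(x)|²`. Hence roots satisfy `Re x < 0`, `S` is then
nonincreasing, and a common root of `p_m` and `p_n` with `m + 1 < n` would give
`0 = S_{n-1} ≤ S_{m+1} < S_m = 0`, since consecutive `p_k` have no common root.
-/

theorem eval_besselP_add_two (x : ℂ) (n : ℕ) :
    (besselP (n + 2)).eval x = (2 * n + 3) * x * (besselP (n + 1)).eval x + (besselP n).eval x := by
  rw [besselP]
  simp only [Polynomial.eval_add, Polynomial.eval_mul, Polynomial.eval_C, Polynomial.eval_X]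
  ring

theorem eval_zero_besselP (n : ℕ) : (besselP n).eval 0 = 1 := by
  induction n using Nat.twoStepInduction with
  | zero => simp [besselP]
  | one => simp [besselP]
  | more n ih _ => simp [eval_besselP_add_two, ih]

theorem eval_besselP_succ_ne_zero {x : ℂ} {n : ℕ} (hn : (besselP n).eval x = 0) :
    (besselP (n + 1)).eval x ≠ 0 := by
  induction n with
  | zero => simp [besselP] at hn
  | succ n ih =>
    intro hn'
    exact ih (by simpa [eval_besselP_add_two, hn] using hn') hn

open ComplexConjugate

def besselPairing (x : ℂ) (n : ℕ) : ℝ :=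
  ((besselP (n + 1)).eval x * conj ((besselP n).eval x)).re

theorem besselPairing_zero (x : ℂ) : besselPairing x 0 = x.re + 1 := by
  simp [besselPairing, besselP]

theorem besselPairing_succ (x : ℂ) (n : ℕ) :
    besselPairing x (n + 1) =
      besselPairing x n + (2 * n + 3) * x.re * Complex.normSq ((besselP (n + 1)).eval x) := by
  set a := (besselP (n + 1)).eval x
  have h : (besselP (n + 2)).eval x * conj a =
      ((2 * n + 3) * Complex.normSq a : ℝ) * x + conj (a * conj ((besselP n).eval x)) := by
    rw [eval_besselP_add_two, map_mul, Complex.conj_conj, Complex.ofReal_mul, ← Complex.mul_conj]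
    push_cast
    ring
  rw [besselPairing, h, Complex.add_re, Complex.re_ofReal_mul, Complex.conj_re, besselPairing]
  ring

theorem besselPairing_eq_zero {x : ℂ} {n : ℕ} (h : (besselP (n + 1)).eval x = 0) :
    besselPairing x n = 0 := by
  simp [besselPairing, h]

theorem re_neg_of_eval_besselP_eq_zero {x : ℂ} {n : ℕ} (hn : 1 ≤ n)
    (h : (besselP n).eval x = 0) : x.re < 0 := by
  obtain ⟨n, rfl⟩ := Nat.exists_eq_add_of_le' hn
  by_contra! hx
  have hmono : Monotone (besselPairing x) := monotone_nat_of_le_succ fun k => by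
    rw [besselPairing_succ]
    have := Complex.normSq_nonneg ((besselP (k + 1)).eval x)
    have : (0 : ℝ) ≤ 2 * k + 3 := by positivity
    nlinarith [mul_nonneg this hx]
  have := hmono (Nat.zero_le n)
  rw [besselPairing_zero, besselPairing_eq_zero h] at this
  linarith

theorem besselPairing_antitone {x : ℂ} (hx : x.re < 0) : Antitone (besselPairing x) :=
  antitone_nat_of_succ_le fun k => by
    rw [besselPairing_succ]
    have := Complex.normSq_nonneg ((besselP (k + 1)).eval x)
    have : (0 : ℝ) ≤ 2 * k + 3 := by positivity
    nlinarith [mul_nonneg this (neg_nonneg.2 hx.le)]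

theorem eval_besselP_ne_zero_of_lt {x : ℂ} {m n : ℕ} (hmn : m < n)
    (hn : (besselP n).eval x = 0) : (besselP m).eval x ≠ 0 := by
  intro hm
  rcases Nat.lt_or_ge (m + 1) n with hlt | hle
  · have hx := re_neg_of_eval_besselP_eq_zero (by omega) hn
    have hneg : besselPairing x (m + 1) < 0 := by
      rw [besselPairing_succ]
      simp only [besselPairing, hm, map_zero, mul_zero, Complex.zero_re, zero_add]
      have := Complex.normSq_pos.2 (eval_besselP_succ_ne_zero hm)
      have : (0 : ℝ) < 2 * m + 3 := by positivity
      nlinarith [mul_pos this (neg_pos.2 hx)]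
    obtain ⟨k, rfl⟩ := Nat.exists_eq_add_of_le' (show 1 ≤ n by omega)
    have := besselPairing_antitone hx (show m + 1 ≤ k by omega)
    rw [besselPairing_eq_zero hn] at this
    linarith
  · exact eval_besselP_succ_ne_zero hm (by rwa [show m + 1 = n by omega])

theorem aeval_besselH2 {A : Type*} [CommRing A] [Algebra ℂ A] (t : A) (n : ℕ) :
    aeval ![t, 1] (besselH2 n) = Polynomial.aeval t (besselP n) := by
  induction n using Nat.twoStepInduction with
  | zero => simp [besselH2, besselP]
  | one => simp [besselH2, besselP]
  | more n ih₀ ih₁ =>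
    rw [besselH2, besselP]
    simp [ih₀, ih₁]

def HasLowestDegree {R : Type*} [CommSemiring R] (f : MvPolynomial (Fin 2) R) (n : ℕ) : Prop :=
  (∀ m ∈ f.support, n ≤ totDeg m) ∧ ∃ m ∈ f.support, totDeg m = n

theorem totDeg_eq (m : Fin 2 →₀ ℕ) : totDeg m = m 0 + m 1 := by
  rw [totDeg, Finsupp.sum_fintype _ _ fun _ => rfl, Fin.sum_univ_two]

section toMvPolynomial

variable {R : Type*} [CommSemiring R]

theorem coeff_toMvPolynomial_zero_mul_X_one_pow (p : Polynomial R) (e : ℕ)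
    (m : Fin 2 →₀ ℕ) :
    coeff m (p.toMvPolynomial 0 * X 1 ^ e) = if m 1 = e then p.coeff (m 0) else 0 := by
  induction p using Polynomial.induction_on' with
  | add p q hp hq => simp only [map_add, add_mul, coeff_add, hp, hq]; split_ifs <;> simp
  | monomial k c =>
    have hmon :
        (Polynomial.monomial k c).toMvPolynomial (0 : Fin 2) * (X 1 : MvPolynomial _ R) ^ e =
        monomial (Finsupp.single 0 k + Finsupp.single 1 e) c := by
      simp only [Polynomial.toMvPolynomial, Polynomial.aeval_monomial, algebraMap_eq,
        X_pow_eq_monomial, C_mul_monomial, monomial_mul, mul_one]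
    have hm : Finsupp.single 0 k + Finsupp.single 1 e = m ↔ m 1 = e ∧ k = m 0 := by
      simp [Finsupp.ext_iff, Fin.forall_fin_two, eq_comm, and_comm]
    rw [hmon, coeff_monomial, Polynomial.coeff_monomial]
    by_cases h : m 1 = e <;> by_cases h' : k = m 0 <;> simp_all

theorem hasLowestDegree_toMvPolynomial_zero_mul_X_one_pow {p : Polynomial R} (hp : p.coeff 0 ≠ 0)
    (e : ℕ) : HasLowestDegree (p.toMvPolynomial 0 * X 1 ^ e) e := by
  refine ⟨fun m hm => ?_, Finsupp.single 1 e, ?_, ?_⟩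
  · rw [mem_support_iff, coeff_toMvPolynomial_zero_mul_X_one_pow] at hm
    have he : m 1 = e := by_contra fun h => hm (if_neg h)
    rw [totDeg_eq]
    omega
  · simpa [coeff_toMvPolynomial_zero_mul_X_one_pow] using hp
  · simp [totDeg_eq]

theorem homogeneousComponent_toMvPolynomial {σ : Type*} (p : Polynomial R) (i : σ) (n : ℕ) :
    homogeneousComponent n (p.toMvPolynomial i) = C (p.coeff n) * X i ^ n := by
  induction p using Polynomial.induction_on' with
  | add p q hp hq => simp [hp, hq, add_mul]
  | monomial k c =>
    have hmon : (Polynomial.monomial k c).toMvPolynomial i = monomial (Finsupp.single i k) c := by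
      simp [Polynomial.toMvPolynomial, C_mul_X_pow_eq_monomial]
    rw [hmon, homogeneousComponent_of_mem (isHomogeneous_monomial c (Finsupp.degree_single i k)),
      Polynomial.coeff_monomial]
    rcases eq_or_ne k n with rfl | hkn
    · simp [C_mul_X_pow_eq_monomial]
    · simp [hkn, hkn.symm]

theorem constantCoeff_toMvPolynomial {σ : Type*} (p : Polynomial R) (i : σ) :
    constantCoeff (p.toMvPolynomial i) = p.coeff 0 := by
  rw [← eval_zero, eval_toMvPolynomial, Polynomial.coeff_zero_eq_eval_zero, Pi.zero_apply]

theorem coeff_eq_zero_of_X_dvd {σ : Type*} {f : MvPolynomial σ R} {i : σ} (h : X i ∣ f)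
    {m : σ →₀ ℕ} (hm : m i = 0) : coeff m f = 0 := by
  classical
  obtain ⟨g, rfl⟩ := h
  simp [coeff_X_mul', hm]

end toMvPolynomial

theorem toMvPolynomial_taylor {R σ : Type*} [CommSemiring R] (r : R) (p : Polynomial R) (i : σ) :
    (Polynomial.taylor r p).toMvPolynomial i = Polynomial.aeval (X i + C r) p := by
  rw [Polynomial.taylor_apply, Polynomial.toMvPolynomial, Polynomial.aeval_comp]
  simp

section igFt

variable (d : ℕ) (x₀ : ℂ)

theorem igFt_zero :
    igFt d x₀ 0 =
      (Polynomial.taylor x₀ (Polynomial.X ^ (d - 1))).toMvPolynomial 0 * X 1 ^ d := by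
  simp [igFt]

theorem igFt_succ (j : ℕ) :
    igFt d x₀ (j + 1) =
      (Polynomial.taylor x₀ (Polynomial.X ^ (d - (j + 1)) * besselP j)).toMvPolynomial 0 *
        X 1 ^ (d - (j + 1)) := by
  rw [igFt, if_neg j.succ_ne_zero, Nat.add_sub_cancel, aeval_besselH2]
  simp [toMvPolynomial_taylor]
  ring

theorem igFt_self {d : ℕ} (hd : 1 ≤ d) :
    igFt d x₀ d = (Polynomial.taylor x₀ (besselP (d - 1))).toMvPolynomial 0 := by
  obtain ⟨d, rfl⟩ := Nat.exists_eq_add_of_le' hd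
  simp [igFt_succ]

theorem X_one_dvd_igFt {d j : ℕ} (hj : j < d) : X 1 ∣ igFt d x₀ j := by
  cases j with
  | zero => rw [igFt_zero]; exact (dvd_pow_self _ (by omega)).mul_left _
  | succ j => rw [igFt_succ]; exact (dvd_pow_self _ (by omega)).mul_left _

end igFt

/-- If `x₀` is a simple root of the Bessel polynomial `p_{d-1}`, then in the
translated chart the coordinate functions `f₀, f₁, …, f_d` have lowest-degree terms
of degrees `d, d-1, …, 1, 1` respectively; the lowest-degree term of `f_d` is a
nonzero multiple of `λ'`; and the origin is a zero of multiplicity exactly `1` of a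
generic linear combination `∑ a_j f_j`. -/
theorem igFt_multiplicity_one (d : ℕ) (hd : 2 ≤ d) (x₀ : ℂ)
    (hroot : Polynomial.eval x₀ (besselP (d - 1)) = 0)
    (hsimple : Polynomial.eval x₀ (Polynomial.derivative (besselP (d - 1))) ≠ 0) :
    ((∀ m ∈ (igFt d x₀ 0).support, d ≤ totDeg m) ∧
        ∃ m ∈ (igFt d x₀ 0).support, totDeg m = d) ∧
      (∀ j : ℕ, 1 ≤ j → j ≤ d - 1 →
        (∀ m ∈ (igFt d x₀ j).support, d - j ≤ totDeg m) ∧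
          ∃ m ∈ (igFt d x₀ j).support, totDeg m = d - j) ∧
      (∃ c : ℂ, c ≠ 0 ∧ constantCoeff (igFt d x₀ d) = 0 ∧
        homogeneousComponent 1 (igFt d x₀ d) = C c * X 0) ∧
      (∀ a : Fin (d + 1) → ℂ, a (Fin.last d) ≠ 0 →
        constantCoeff (∑ j : Fin (d + 1), C (a j) * igFt d x₀ j) = 0 ∧
          homogeneousComponent 1 (∑ j : Fin (d + 1), C (a j) * igFt d x₀ j) ≠ 0) := by
  have hx₀ : x₀ ≠ 0 := by
    rintro rfl
    simp [eval_zero_besselP] at hroot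
  have hlast := igFt_self x₀ (show 1 ≤ d by omega)
  refine ⟨?_, fun j hj hjd => ?_, ⟨_, hsimple, ?_, ?_⟩, fun a ha => ?_⟩
  · rw [igFt_zero]
    refine hasLowestDegree_toMvPolynomial_zero_mul_X_one_pow ?_ _
    rw [Polynomial.taylor_coeff_zero, Polynomial.eval_pow, Polynomial.eval_X]
    exact pow_ne_zero _ hx₀
  · obtain ⟨k, rfl⟩ := Nat.exists_eq_add_of_le' hj
    rw [igFt_succ]
    refine hasLowestDegree_toMvPolynomial_zero_mul_X_one_pow ?_ _
    rw [Polynomial.taylor_coeff_zero]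
    simpa [hx₀] using eval_besselP_ne_zero_of_lt (show k < d - 1 by omega) hroot
  · rw [hlast, constantCoeff_toMvPolynomial, Polynomial.taylor_coeff_zero, hroot]
  · rw [hlast, homogeneousComponent_toMvPolynomial, Polynomial.taylor_coeff_one, pow_one]
  · obtain ⟨g, hg⟩ : X 1 ∣ ∑ j : Fin d, C (a j.castSucc) * igFt d x₀ j.castSucc :=
      Finset.dvd_sum fun j _ => (X_one_dvd_igFt x₀ j.isLt).mul_left _
    rw [Fin.sum_univ_castSucc, hg, Fin.val_last, hlast]
    constructor
    · simp [constantCoeff_toMvPolynomial, hroot]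
    · intro h
      rw [map_add, homogeneousComponent_C_mul, homogeneousComponent_toMvPolynomial] at h
      have := congr_arg (coeff (Finsupp.single 0 1)) h
      simp [coeff_homogeneousComponent, coeff_eq_zero_of_X_dvd (dvd_mul_right (X 1) g), ha,
        hsimple] at this
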